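/- arXiv:1502.01139 — 6 statements merged into one kernel-verified Lean document; each statement's English description precedes it below -/
import Mathlib

section
/- Let M = A + W − σ·v·vᵀ be a generalized modularity matrix. Then m_G = λ₁(M) satisfies the strict inequality m_G < λ₁(A+W). -/
open Matrix BigOperators

/-- A nonnegative square matrix is irreducible if for every pair of indices `(i, j)`
there is a positive power `k` with `(A ^ k) i j > 0`. -/
def Matrix.Irreducible {n : ℕ} (A : Matrix (Fin n) (Fin n) ℝ) : Prop :=
  ∀ i j, ∃ k : ℕ, 0 < k ∧ 0 < (A ^ k) i j

/-- The largest eigenvalue `λ₁(X)` of a real symmetric (Hermitian) matrix. -/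
noncomputable def lam1 {n : ℕ} (X : Matrix (Fin n) (Fin n) ℝ) (hX : X.IsHermitian) : ℝ :=
  ⨆ i, hX.eigenvalues i

/-! If `x` is a top eigenvector of `M`, then
`λ₁(M) ‖x‖² = xᵀ(A + W)x - σ (vᵀx)² ≤ λ₁(A + W) ‖x‖²`,
so equality forces `vᵀx = 0` and makes `x` a top eigenvector of `A + W`. Since `A + W` has
nonnegative off-diagonal entries, `|x|` is then a top eigenvector as well, and so is `|x| - x`.
Perron–Frobenius (the zero set of a nonnegative eigenvector is closed under the edges of the
irreducible `A`) makes each of these entrywise positive or zero, so `x` has a constant strict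
sign, which contradicts `vᵀx = 0` for the nonzero nonnegative `v`. -/

namespace Matrix

variable {ι : Type*} [Fintype ι]

theorem IsHermitian.posSemidef_smul_one_sub [DecidableEq ι] {X : Matrix ι ι ℝ}
    (hX : X.IsHermitian) {c : ℝ} (hc : ∀ i, hX.eigenvalues i ≤ c) :
    (c • 1 - X).PosSemidef := by
  have hconj : c • 1 - X = Unitary.conjStarAlgAut ℝ _ hX.eigenvectorUnitary
      (diagonal fun i => c - hX.eigenvalues i) := by
    conv_lhs => rw [hX.spectral_theorem]
    rw [← diagonal_sub, ← smul_one_eq_diagonal, map_sub, map_smul, map_one]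
    rfl
  rw [hconj, Unitary.conjStarAlgAut_apply,
    Unitary.isUnit_coe.posSemidef_star_right_conjugate_iff, posSemidef_diagonal_iff]
  exact fun i => sub_nonneg.2 (hc i)

theorem dotProduct_smul_one_sub_mulVec [DecidableEq ι] (c : ℝ) (X : Matrix ι ι ℝ)
    (x : ι → ℝ) :
    x ⬝ᵥ (c • 1 - X) *ᵥ x = c * (x ⬝ᵥ x) - x ⬝ᵥ X *ᵥ x := by
  rw [sub_mulVec, smul_mulVec, one_mulVec, dotProduct_sub, dotProduct_smul, smul_eq_mul]

theorem dotProduct_mulVec_le_abs {X : Matrix ι ι ℝ} (hX : ∀ i j, i ≠ j → 0 ≤ X i j)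
    (x : ι → ℝ) : x ⬝ᵥ X *ᵥ x ≤ |x| ⬝ᵥ X *ᵥ |x| := by
  simp only [dotProduct, mulVec, Finset.mul_sum, Pi.abs_apply]
  refine Finset.sum_le_sum fun i _ => Finset.sum_le_sum fun j _ => ?_
  rcases eq_or_ne i j with rfl | hij
  · linear_combination -(X i i) * abs_mul_abs_self (x i)
  · rw [mul_left_comm, mul_left_comm |x i|]
    exact mul_le_mul_of_nonneg_left
      ((le_abs_self _).trans (abs_mul _ _).le) (hX i j hij)

theorem mem_of_pow_apply_ne_zero [DecidableEq ι] {R : Type*} [Semiring R] {A : Matrix ι ι R}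
    {S : Set ι} (hS : ∀ i ∈ S, ∀ j, A i j ≠ 0 → j ∈ S) (k : ℕ) {i j : ι} (hi : i ∈ S)
    (hk : (A ^ k) i j ≠ 0) : j ∈ S := by
  induction k generalizing j with
  | zero =>
    obtain rfl : i = j := by_contra fun hij => hk (by rw [pow_zero, one_apply_ne hij])
    exact hi
  | succ k ih =>
    rw [pow_succ, mul_apply] at hk
    obtain ⟨l, -, hl⟩ := Finset.exists_ne_zero_of_sum_ne_zero hk
    exact hS l (ih (left_ne_zero_of_mul hl)) j (right_ne_zero_of_mul hl)

theorem dotProduct_pos_of_pos {v x : ι → ℝ} (hv0 : ∀ i, 0 ≤ v i) (hv : v ≠ 0)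
    (hx : ∀ i, 0 < x i) : 0 < v ⬝ᵥ x := by
  obtain ⟨i, hi⟩ := Function.ne_iff.mp hv
  exact Finset.sum_pos' (fun j _ => mul_nonneg (hv0 j) (hx j).le)
    ⟨i, Finset.mem_univ i, mul_pos (lt_of_le_of_ne (hv0 i) (Ne.symm hi)) (hx i)⟩

end Matrix

namespace Matrix.IsHermitian

variable {n : ℕ} {X : Matrix (Fin n) (Fin n) ℝ} (hX : X.IsHermitian)

theorem eigenvalues_le_lam1 (i : Fin n) : hX.eigenvalues i ≤ lam1 X hX :=
  le_ciSup (Set.finite_range _).bddAbove i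

theorem exists_eigenvalues_eq_lam1 [NeZero n] : ∃ i, hX.eigenvalues i = lam1 X hX :=
  exists_eq_ciSup_of_finite

theorem dotProduct_mulVec_le_lam1_mul (x : Fin n → ℝ) :
    x ⬝ᵥ X *ᵥ x ≤ lam1 X hX * (x ⬝ᵥ x) := by
  have := (hX.posSemidef_smul_one_sub hX.eigenvalues_le_lam1).dotProduct_mulVec_nonneg x
  rw [star_trivial, dotProduct_smul_one_sub_mulVec] at this
  linarith

theorem mulVec_eq_lam1_smul_of_dotProduct_mulVec_eq {x : Fin n → ℝ}
    (h : x ⬝ᵥ X *ᵥ x = lam1 X hX * (x ⬝ᵥ x)) : X *ᵥ x = lam1 X hX • x := by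
  have hP := hX.posSemidef_smul_one_sub hX.eigenvalues_le_lam1
  have hzero := (hP.dotProduct_mulVec_zero_iff x).mp
    (by rw [star_trivial, dotProduct_smul_one_sub_mulVec, h, sub_self])
  rw [sub_mulVec, smul_mulVec, one_mulVec, sub_eq_zero] at hzero
  exact hzero.symm

end Matrix.IsHermitian

namespace Matrix.Irreducible

variable {n : ℕ} {A : Matrix (Fin n) (Fin n) ℝ}

theorem pos_of_nonneg_of_mulVec_apply_eq_zero (hirr : A.Irreducible) (hA : ∀ i j, 0 ≤ A i j)
    {y : Fin n → ℝ} (hy0 : ∀ i, 0 ≤ y i) (hy : y ≠ 0)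
    (hAy : ∀ i, y i = 0 → (A *ᵥ y) i = 0) (i : Fin n) : 0 < y i := by
  obtain ⟨j, hj⟩ := Function.ne_iff.mp hy
  refine (hy0 i).lt_of_ne fun hi => hj ?_
  have hzero_closed : ∀ i ∈ {i | y i = 0}, ∀ j, A i j ≠ 0 → j ∈ {i | y i = 0} := by
    intro i hi j hij
    have hrow : ∑ l, A i l * y l = 0 := hAy i hi
    have hterms := (Finset.sum_eq_zero_iff_of_nonneg fun l _ => mul_nonneg (hA i l) (hy0 l)).mp
      hrow j (Finset.mem_univ j)
    exact (mul_eq_zero.mp hterms).resolve_left hij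
  obtain ⟨k, -, hk⟩ := hirr i j
  exact mem_of_pow_apply_ne_zero hzero_closed k hi.symm hk.ne'

theorem pos_of_mulVec_eq_smul (hirr : A.Irreducible) (hA : ∀ i j, 0 ≤ A i j)
    {W : Matrix (Fin n) (Fin n) ℝ} (hW : W.IsDiag) {y : Fin n → ℝ} {μ : ℝ}
    (heig : (A + W) *ᵥ y = μ • y) (hy0 : ∀ i, 0 ≤ y i) (hy : y ≠ 0) (i : Fin n) :
    0 < y i :=
  hirr.pos_of_nonneg_of_mulVec_apply_eq_zero hA hy0 hy (fun i hi => by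
    have hi_eig := congrFun heig i
    rw [add_mulVec, ← hW.diagonal_diag, Pi.add_apply, mulVec_diagonal, Pi.smul_apply, hi,
      mul_zero, add_zero, smul_zero] at hi_eig
    exact hi_eig) i

theorem pos_or_neg_of_mulVec_eq_lam1_smul (hirr : A.Irreducible) (hA : ∀ i j, 0 ≤ A i j)
    {W : Matrix (Fin n) (Fin n) ℝ} (hW : W.IsDiag)
    (hAW : (A + W).IsHermitian) {x : Fin n → ℝ} (hx : x ≠ 0)
    (heig : (A + W) *ᵥ x = lam1 (A + W) hAW • x) : (∀ i, 0 < x i) ∨ ∀ i, x i < 0 := by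
  have hoff : ∀ i j, i ≠ j → 0 ≤ (A + W) i j := fun i j hij => by
    simpa [hW hij] using hA i j
  have habs_eig : (A + W) *ᵥ |x| = lam1 (A + W) hAW • |x| := by
    refine hAW.mulVec_eq_lam1_smul_of_dotProduct_mulVec_eq
      (le_antisymm (hAW.dotProduct_mulVec_le_lam1_mul _) ?_)
    calc lam1 (A + W) hAW * (|x| ⬝ᵥ |x|) = x ⬝ᵥ (A + W) *ᵥ x := by
          rw [heig, dotProduct_smul, smul_eq_mul]
          simp only [dotProduct, Pi.abs_apply, abs_mul_abs_self]
      _ ≤ |x| ⬝ᵥ (A + W) *ᵥ |x| := dotProduct_mulVec_le_abs hoff x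
  have habs_pos := hirr.pos_of_mulVec_eq_smul hA hW habs_eig (fun i => abs_nonneg (x i))
    (by simpa using hx)
  rcases eq_or_ne (|x| - x) 0 with h | h
  · left
    intro i
    rw [← sub_eq_zero.mp h]
    exact habs_pos i
  · right
    have hsub_pos := hirr.pos_of_mulVec_eq_smul hA hW (y := |x| - x)
      (by rw [mulVec_sub, habs_eig, heig, smul_sub])
      (fun i => sub_nonneg.2 (le_abs_self (x i))) h
    intro i
    by_contra! hi
    simpa [abs_of_nonneg hi] using hsub_pos i

end Matrix.Irreducible

theorem stmt1_general {n : ℕ} (A W M : Matrix (Fin n) (Fin n) ℝ)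
    (hApos : ∀ i j, 0 ≤ A i j) (hAirr : A.Irreducible)
    (hW : W.IsDiag) (v : Fin n → ℝ) (hv : v ≠ 0) (hvpos : ∀ i, 0 ≤ v i)
    (σ : ℝ) (hσ : 0 < σ)
    (hMdef : M = A + W - σ • vecMulVec v v)
    (hM : M.IsHermitian) (hAW : (A + W).IsHermitian) :
    lam1 M hM < lam1 (A + W) hAW := by
  have : NeZero n := ⟨by rintro rfl; exact hv (Subsingleton.elim _ _)⟩
  obtain ⟨i₀, hi₀⟩ := hM.exists_eigenvalues_eq_lam1
  set x : Fin n → ℝ := (hM.eigenvectorBasis i₀).ofLp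
  have hx : x ≠ 0 := by simpa [x] using hM.eigenvectorBasis.orthonormal.ne_zero i₀
  have hxx : 0 ≤ x ⬝ᵥ x := by simpa using dotProduct_star_self_nonneg x
  have hMx : x ⬝ᵥ M *ᵥ x = lam1 M hM * (x ⬝ᵥ x) := by
    rw [hM.mulVec_eigenvectorBasis, hi₀, dotProduct_smul, smul_eq_mul]
  have hquad : x ⬝ᵥ M *ᵥ x = x ⬝ᵥ (A + W) *ᵥ x - σ * (v ⬝ᵥ x) ^ 2 := by
    rw [hMdef, sub_mulVec, dotProduct_sub, smul_mulVec, dotProduct_smul,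
      dotProduct_mulVec x (vecMulVec v v), vecMul_vecMulVec, smul_dotProduct, smul_eq_mul,
      smul_eq_mul, dotProduct_comm x v]
    ring
  by_contra! hge
  have hrayleigh := hAW.dotProduct_mulVec_le_lam1_mul x
  have hgap := mul_le_mul_of_nonneg_right hge hxx
  have hvx : v ⬝ᵥ x = 0 :=
    pow_eq_zero_iff two_ne_zero |>.mp (by nlinarith [sq_nonneg (v ⬝ᵥ x)])
  rw [hvx] at hquad
  have heig := hAW.mulVec_eq_lam1_smul_of_dotProduct_mulVec_eq (by linarith)
  rcases hAirr.pos_or_neg_of_mulVec_eq_lam1_smul hApos hW hAW hx heig with hpos | hneg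
  · exact (dotProduct_pos_of_pos hvpos hv hpos).ne' hvx
  · have hneg_pos := dotProduct_pos_of_pos hvpos hv (x := -x) fun i => neg_pos.2 (hneg i)
    rw [dotProduct_neg, hvx, neg_zero] at hneg_pos
    exact hneg_pos.false

theorem stmt1 {n : ℕ} (hn : 0 < n) (A W M : Matrix (Fin n) (Fin n) ℝ)
    (hA : A.IsHermitian) (hApos : ∀ i j, 0 ≤ A i j) (hAirr : A.Irreducible)
    (hW : W.IsDiag) (v : Fin n → ℝ) (hv : v ≠ 0) (hvpos : ∀ i, 0 ≤ v i)
    (σ : ℝ) (hσ : 0 < σ)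
    (hMdef : M = A + W - σ • vecMulVec v v)
    (hM : M.IsHermitian) (hAW : (A + W).IsHermitian) :
    lam1 M hM < lam1 (A + W) hAW :=
  stmt1_general A W M hApos hAirr hW v hv hvpos σ hσ hMdef hM hAW
end

section
/- Let M = A + W − σ·v·vᵀ be a generalized modularity matrix, and let x ∈ ℝⁿ be a nonzero vector with M x = m_G x and vᵀx ≥ 0. Then the set S = { i : xᵢ ≥ 0 } is nonempty and induces a connected subgraph. -/
open Matrix BigOperators

/-- The subgraph induced on `S` by the weighted adjacency matrix `A`: distinct vertices
`i, j ∈ S` are adjacent whenever the corresponding weight is positive. -/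
def inducedSubgraph {n : ℕ} (A : Matrix (Fin n) (Fin n) ℝ) (S : Set (Fin n)) :
    SimpleGraph S :=
  SimpleGraph.fromRel (fun i j => 0 < A i.val j.val)


/-!
Suppose `S = {x ≥ 0}` splits as `P ⊔ (S \ P)` with no edge across. Reweight `x` on `S` to
`y = α x_P + β x_{S \ P}`, with `(α, β) ≠ 0` chosen so that `v ⬝ y = 0`; then `M y = (A + W) y`.
On `S` the eigen-equation gives `((A + W) y - m y)_i = γ_i r_i`, where `γ` is the weight
(`α` on `P`, `β` on `S \ P`) and `r = σ (v ⬝ x) v - A x_{Sᶜ} ≥ 0`, so `y ⬝ (m - M) y ≤ 0`.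
Since `m • 1 - M` is positive semidefinite, `y` lies in its kernel, which forces `r_i = 0`, i.e.
no edge from `i` to `{x < 0}`, wherever `γ_i ≠ 0`. So `P` or `S \ P` has no edge leaving it,
contradicting irreducibility.
-/

theorem posSemidef_lam1_smul_one_sub {n : ℕ} (M : Matrix (Fin n) (Fin n) ℝ) (hM : M.IsHermitian) :
    (lam1 M hM • (1 : Matrix (Fin n) (Fin n) ℝ) - M).PosSemidef := by
  have hle : ∀ i, hM.eigenvalues i ≤ lam1 M hM :=
    fun i => le_ciSup (Set.finite_range _).bddAbove i
  generalize lam1 M hM = m at hle ⊢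
  set U : Matrix (Fin n) (Fin n) ℝ := (hM.eigenvectorUnitary : Matrix (Fin n) (Fin n) ℝ)
  have hU : U * Uᴴ = 1 := Unitary.coe_mul_star_self _
  have hspec : M = U * diagonal hM.eigenvalues * Uᴴ := by
    simpa [RCLike.ofReal_real_eq_id, star_eq_conjTranspose] using hM.spectral_theorem
  have key : m • 1 - M = U * diagonal (fun i => m - hM.eigenvalues i) * Uᴴ := by
    conv_lhs => rw [hspec]
    rw [← diagonal_sub, mul_sub, sub_mul, ← smul_one_eq_diagonal, Matrix.mul_smul, mul_one,
      smul_mul_assoc, hU]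
  rw [key]
  exact (PosSemidef.diagonal fun i => sub_nonneg.2 (hle i)).mul_mul_conjTranspose_same _

theorem Matrix.PosSemidef.mulVec_eq_zero_of_forall_mul_nonpos {ι : Type*} [Fintype ι]
    {N : Matrix ι ι ℝ} (hN : N.PosSemidef) {y : ι → ℝ} (hy : ∀ i, y i * (N *ᵥ y) i ≤ 0) :
    N *ᵥ y = 0 :=
  (hN.dotProduct_mulVec_zero_iff y).1 <|
    le_antisymm (Finset.sum_nonpos fun i _ => hy i) (hN.dotProduct_mulVec_nonneg y)

theorem Matrix.Irreducible.exists_apply_ne_zero_of_mem_of_notMem {n : ℕ}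
    {A : Matrix (Fin n) (Fin n) ℝ} (hA : A.Irreducible) {P : Set (Fin n)} {i j : Fin n}
    (hi : i ∈ P) (hj : j ∉ P) : ∃ p ∈ P, ∃ q ∉ P, A p q ≠ 0 := by
  by_contra! hclosed
  have hpow : ∀ k, ∀ p ∈ P, ∀ q ∉ P, (A ^ k) p q = 0 := by
    intro k
    induction k with
    | zero => exact fun p hp q hq => one_apply_ne (ne_of_mem_of_not_mem hp hq)
    | succ k ih =>
      intro p hp q hq
      rw [pow_succ', mul_apply]
      refine Finset.sum_eq_zero fun l _ => ?_
      by_cases hl : l ∈ P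
      · rw [ih l hl q hq, mul_zero]
      · rw [hclosed p hp l hl, zero_mul]
  obtain ⟨k, -, hk⟩ := hA i j
  exact hk.ne' (hpow k i hi j hj)

theorem inducedSubgraph_connected_of_forall_cut {n : ℕ} {A : Matrix (Fin n) (Fin n) ℝ}
    {S : Set (Fin n)} (hS : S.Nonempty)
    (hcut : ∀ P ⊆ S, ∀ i ∈ P, ∀ j ∈ S \ P, ∃ p ∈ P, ∃ q ∈ S \ P, 0 < A p q ∨ 0 < A q p) :
    (inducedSubgraph A S).Connected := by
  rw [SimpleGraph.connected_iff]
  refine ⟨fun u w => ?_, hS.to_subtype⟩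
  by_contra huw
  obtain ⟨p, ⟨hpS, hup⟩, q, ⟨hqS, hq⟩, hpq⟩ :=
    hcut {k | ∃ hk : k ∈ S, (inducedSubgraph A S).Reachable u ⟨k, hk⟩} (fun k hk => hk.1) u
      ⟨u.2, .rfl⟩ w ⟨w.2, fun ⟨_, h⟩ => huw h⟩
  refine hq ⟨hqS, hup.trans (SimpleGraph.Adj.reachable ?_)⟩
  rw [inducedSubgraph, SimpleGraph.fromRel_adj]
  exact ⟨fun h => hq ⟨hqS, by simpa [← h] using hup⟩, hpq⟩

theorem exists_nonneg_of_dotProduct_nonneg {n : ℕ} {v x : Fin n → ℝ} (hvpos : ∀ i, 0 ≤ v i)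
    (hv : v ≠ 0) (hvx : 0 ≤ v ⬝ᵥ x) : ∃ i, 0 ≤ x i := by
  by_contra! hneg
  obtain ⟨k, hk⟩ := Function.ne_iff.mp hv
  have : v ⬝ᵥ x < 0 ⬝ᵥ x :=
    Finset.sum_lt_sum
      (fun i _ => by simpa using mul_nonpos_of_nonneg_of_nonpos (hvpos i) (hneg i).le)
      ⟨k, Finset.mem_univ k,
        by simpa using mul_neg_of_pos_of_neg ((hvpos k).lt_of_ne' hk) (hneg k)⟩
  simp only [zero_dotProduct] at this
  linarith

theorem mul_eq_zero_of_mulVec_apply_nonneg {ι : Type*} [Fintype ι] {A : Matrix ι ι ℝ}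
    {z : ι → ℝ} {i : ι} (hA : ∀ j, 0 ≤ A i j) (hz : ∀ j, z j ≤ 0) (h : 0 ≤ (A *ᵥ z) i)
    (j : ι) : A i j * z j = 0 :=
  (Finset.sum_eq_zero_iff_of_nonpos fun j _ => mul_nonpos_of_nonneg_of_nonpos (hA j) (hz j)).1
    (le_antisymm (Finset.sum_nonpos fun j _ => mul_nonpos_of_nonneg_of_nonpos (hA j) (hz j)) h) j
    (Finset.mem_univ j)

theorem mulVec_indicator_mul_apply {ι R : Type*} [Fintype ι] [CommSemiring R]
    {A : Matrix ι ι R} {S : Set ι} {γ x : ι → R}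
    (hγ : ∀ k ∈ S, ∀ l ∈ S, A k l ≠ 0 → γ k = γ l) {k : ι} (hk : k ∈ S) :
    (A *ᵥ S.indicator (γ * x)) k = γ k * (A *ᵥ S.indicator x) k := by
  simp only [mulVec, dotProduct, Finset.mul_sum]
  refine Finset.sum_congr rfl fun l _ => ?_
  by_cases hl : l ∈ S
  · simp only [Set.indicator_of_mem hl, Pi.mul_apply]
    by_cases hkl : A k l = 0
    · simp [hkl]
    · rw [hγ k hk l hl hkl, mul_left_comm]
  · simp [Set.indicator_of_notMem hl]

theorem dotProduct_indicator_ite_mul {ι R : Type*} [Fintype ι] [CommSemiring R]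
    {S P : Set ι} [DecidablePred (· ∈ P)] (hPS : P ⊆ S) (α β : R) (v x : ι → R) :
    v ⬝ᵥ S.indicator ((fun k => if k ∈ P then α else β) * x) =
      α * (v ⬝ᵥ P.indicator x) + β * (v ⬝ᵥ (S \ P).indicator x) := by
  have : S.indicator ((fun k => if k ∈ P then α else β) * x) =
      α • P.indicator x + β • (S \ P).indicator x := by
    ext k
    by_cases hkP : k ∈ P
    · simp [hkP, hPS hkP]
    · by_cases hkS : k ∈ S <;> simp [hkP, hkS]
  rw [this, dotProduct_add, dotProduct_smul, dotProduct_smul, smul_eq_mul, smul_eq_mul]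

section ModularityEigenvector

variable {n : ℕ} {A W : Matrix (Fin n) (Fin n) ℝ} {v x : Fin n → ℝ} {σ : ℝ}

theorem modularity_mulVec_apply (hW : W.IsDiag) (z : Fin n → ℝ) (k : Fin n) :
    ((A + W - σ • vecMulVec v v) *ᵥ z) k = (A *ᵥ z) k + W k k * z k - σ * (v ⬝ᵥ z) * v k := by
  rw [← hW.diagonal_diag]
  simp [add_mulVec, sub_mulVec, smul_mulVec, vecMulVec_mulVec, mulVec_diagonal, mul_assoc]

theorem modularity_eigen_apply_indicator (hW : W.IsDiag) {μ : ℝ}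
    (heig : (A + W - σ • vecMulVec v v) *ᵥ x = μ • x) (S : Set (Fin n)) (k : Fin n) :
    (A *ᵥ S.indicator x) k + W k k * x k - μ * x k =
      σ * (v ⬝ᵥ x) * v k - (A *ᵥ Sᶜ.indicator x) k := by
  have h := congrFun heig k
  rw [modularity_mulVec_apply hW, Pi.smul_apply, smul_eq_mul] at h
  have hsplit := congrFun (congrArg (A *ᵥ ·) (S.indicator_self_add_compl x)) k
  simp only [mulVec_add, Pi.add_apply] at hsplit
  linarith

theorem apply_eq_zero_of_dotProduct_indicator_eq_zero {γ : Fin n → ℝ}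
    (hApos : ∀ i j, 0 ≤ A i j) (hW : W.IsDiag) (hvpos : ∀ i, 0 ≤ v i) (hσ : 0 ≤ σ)
    (hM : (A + W - σ • vecMulVec v v).IsHermitian)
    (heig : (A + W - σ • vecMulVec v v) *ᵥ x = lam1 _ hM • x) (hvx : 0 ≤ v ⬝ᵥ x)
    (hγ : ∀ i j, 0 ≤ x i → 0 ≤ x j → A i j ≠ 0 → γ i = γ j)
    (hvy : v ⬝ᵥ {k | 0 ≤ x k}.indicator (γ * x) = 0)
    {i j : Fin n} (hi : 0 ≤ x i) (hγi : γ i ≠ 0) (hj : x j < 0) : A i j = 0 := by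
  set S : Set (Fin n) := {k | 0 ≤ x k}
  set m := lam1 _ hM
  set y := S.indicator (γ * x)
  have hxN : ∀ k, Sᶜ.indicator x k ≤ 0 :=
    Set.indicator_nonpos fun k (hk : ¬ 0 ≤ x k) => (not_le.1 hk).le
  set r : Fin n → ℝ := fun k => σ * (v ⬝ᵥ x) * v k - (A *ᵥ Sᶜ.indicator x) k
  have hr : ∀ k, 0 ≤ r k := fun k =>
    sub_nonneg.2 <| (show (A *ᵥ Sᶜ.indicator x) k ≤ 0 from Finset.sum_nonpos (s := Finset.univ)
      fun l _ => mul_nonpos_of_nonneg_of_nonpos (hApos k l) (hxN l)).trans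
      (mul_nonneg (mul_nonneg hσ hvx) (hvpos k))
  have hNy : ∀ k ∈ S, ((m • 1 - (A + W - σ • vecMulVec v v)) *ᵥ y) k = -(γ k * r k) := by
    intro k hk
    have hAy : (A *ᵥ y) k = γ k * (A *ᵥ S.indicator x) k :=
      mulVec_indicator_mul_apply (fun k hk l hl => hγ k l hk hl) hk
    have hres : (A *ᵥ S.indicator x) k + W k k * x k - m * x k = r k :=
      modularity_eigen_apply_indicator hW heig S k
    rw [sub_mulVec, Pi.sub_apply, smul_mulVec, one_mulVec, modularity_mulVec_apply hW, hvy, hAy]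
    simp only [y, Set.indicator_of_mem hk, Pi.smul_apply, Pi.mul_apply, smul_eq_mul]
    linear_combination (-γ k) * hres
  have hzero := (posSemidef_lam1_smul_one_sub _ hM).mulVec_eq_zero_of_forall_mul_nonpos
    (y := y) fun k => by
      by_cases hk : k ∈ S
      · rw [hNy k hk]
        simp only [y, Set.indicator_of_mem hk, Pi.mul_apply]
        nlinarith [mul_nonneg (mul_self_nonneg (γ k)) (mul_nonneg (show 0 ≤ x k from hk) (hr k))]
      · simp [y, Set.indicator_of_notMem hk]
  have hri : r i = 0 := by
    have h := congrFun hzero i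
    rw [hNy i hi, Pi.zero_apply, neg_eq_zero] at h
    exact (mul_eq_zero.1 h).resolve_left hγi
  have hAj := mul_eq_zero_of_mulVec_apply_nonneg (hApos i) hxN
    ((mul_nonneg (mul_nonneg hσ hvx) (hvpos i)).trans_eq (sub_eq_zero.1 hri)) j
  rw [Set.indicator_of_mem (show j ∈ Sᶜ from not_le.2 hj)] at hAj
  exact (mul_eq_zero.1 hAj).resolve_right hj.ne

theorem exists_pos_across_of_modularity_eigenvector (hApos : ∀ i j, 0 ≤ A i j)
    (hAirr : A.Irreducible) (hW : W.IsDiag) (hvpos : ∀ i, 0 ≤ v i) (hσ : 0 ≤ σ)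
    (hM : (A + W - σ • vecMulVec v v).IsHermitian)
    (heig : (A + W - σ • vecMulVec v v) *ᵥ x = lam1 _ hM • x) (hvx : 0 ≤ v ⬝ᵥ x)
    {P : Set (Fin n)} (hPS : P ⊆ {k | 0 ≤ x k}) {i j : Fin n} (hi : i ∈ P)
    (hj : j ∈ {k | 0 ≤ x k} \ P) :
    ∃ p ∈ P, ∃ q ∈ {k | 0 ≤ x k} \ P, 0 < A p q ∨ 0 < A q p := by
  classical
  set S : Set (Fin n) := {k | 0 ≤ x k}
  by_contra! hcut
  replace hcut : ∀ p ∈ P, ∀ q ∈ S \ P, A p q = 0 ∧ A q p = 0 := fun p hp q hq =>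
    ⟨(hcut p hp q hq).1.antisymm (hApos p q), (hcut p hp q hq).2.antisymm (hApos q p)⟩
  obtain ⟨α, β, hαβ, hne⟩ : ∃ α β : ℝ,
      α * (v ⬝ᵥ P.indicator x) + β * (v ⬝ᵥ (S \ P).indicator x) = 0 ∧ (α ≠ 0 ∨ β ≠ 0) := by
    by_cases ha : v ⬝ᵥ P.indicator x = 0
    · exact ⟨1, 0, by simp [ha], Or.inl one_ne_zero⟩
    · exact ⟨v ⬝ᵥ (S \ P).indicator x, -(v ⬝ᵥ P.indicator x), by ring,
        Or.inr (neg_ne_zero.2 ha)⟩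
  set γ : Fin n → ℝ := fun k => if k ∈ P then α else β
  have hγ : ∀ k l, 0 ≤ x k → 0 ≤ x l → A k l ≠ 0 → γ k = γ l := by
    intro k l hk hl hkl
    by_cases hkP : k ∈ P <;> by_cases hlP : l ∈ P <;> simp only [γ, hkP, hlP, if_true, if_false]
    · exact absurd (hcut k hkP l ⟨hl, hlP⟩).1 hkl
    · exact absurd (hcut l hlP k ⟨hk, hkP⟩).2 hkl
  have hout : ∀ k, 0 ≤ x k → γ k ≠ 0 → ∀ l, x l < 0 → A k l = 0 := fun k hk hγk l hl =>
    apply_eq_zero_of_dotProduct_indicator_eq_zero hApos hW hvpos hσ hM heig hvx hγ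
      ((dotProduct_indicator_ite_mul hPS α β v x).trans hαβ) hk hγk hl
  rcases hne with hα | hβ
  · obtain ⟨p, hp, q, hq, hpq⟩ := hAirr.exists_apply_ne_zero_of_mem_of_notMem hi hj.2
    by_cases hqS : 0 ≤ x q
    · exact hpq (hcut p hp q ⟨hqS, hq⟩).1
    · exact hpq (hout p (hPS hp) (by simp [γ, hp, hα]) q (not_le.1 hqS))
  · obtain ⟨p, hp, q, hq, hpq⟩ :=
      hAirr.exists_apply_ne_zero_of_mem_of_notMem hj fun h => h.2 hi
    by_cases hqS : 0 ≤ x q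
    · exact hpq (hcut q (not_not.1 fun h => hq ⟨hqS, h⟩) p hp).2
    · exact hpq (hout p hp.1 (by simp [γ, hp.2, hβ]) q (not_le.1 hqS))

end ModularityEigenvector

theorem stmt4_general {n : ℕ} (A W M : Matrix (Fin n) (Fin n) ℝ)
    (hApos : ∀ i j, 0 ≤ A i j) (hAirr : A.Irreducible)
    (hW : W.IsDiag) (v : Fin n → ℝ) (hv : v ≠ 0) (hvpos : ∀ i, 0 ≤ v i)
    (σ : ℝ) (hσ : 0 < σ)
    (hMdef : M = A + W - σ • vecMulVec v v) (hM : M.IsHermitian)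
    (x : Fin n → ℝ) (heig : M *ᵥ x = lam1 M hM • x)
    (hvx : 0 ≤ v ⬝ᵥ x) :
    ({i | 0 ≤ x i} : Set (Fin n)).Nonempty ∧
    (inducedSubgraph A {i | 0 ≤ x i}).Connected := by
  subst hMdef
  have hS : ({i | 0 ≤ x i} : Set (Fin n)).Nonempty :=
    exists_nonneg_of_dotProduct_nonneg hvpos hv hvx
  exact ⟨hS, inducedSubgraph_connected_of_forall_cut hS fun _ hPS _ hi _ hj =>
    exists_pos_across_of_modularity_eigenvector hApos hAirr hW hvpos hσ.le hM heig hvx hPS hi hj⟩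

theorem stmt4 {n : ℕ} (hn : 0 < n) (A W M : Matrix (Fin n) (Fin n) ℝ)
    (hA : A.IsHermitian) (hApos : ∀ i j, 0 ≤ A i j) (hAirr : A.Irreducible)
    (hW : W.IsDiag) (v : Fin n → ℝ) (hv : v ≠ 0) (hvpos : ∀ i, 0 ≤ v i)
    (σ : ℝ) (hσ : 0 < σ)
    (hMdef : M = A + W - σ • vecMulVec v v) (hM : M.IsHermitian)
    (x : Fin n → ℝ) (hx : x ≠ 0) (heig : M *ᵥ x = lam1 M hM • x)
    (hvx : 0 ≤ v ⬝ᵥ x) :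
    ({i | 0 ≤ x i} : Set (Fin n)).Nonempty ∧
    (inducedSubgraph A {i | 0 ≤ x i}).Connected :=
  stmt4_general A W M hApos hAirr hW v hv hvpos σ hσ hMdef hM x heig hvx
end

section
/- Let m ≥ 2 be an integer and n = m+1. Let A be the n×n matrix with A_{ii} = √m for all i, A_{1j} = A_{j1} = 1 for j = 2,…,n, and all other entries zero (the star graph on n nodes with a loop of weight √m on every node), and let M_NG = A − (1/vol G)·d·dᵀ be its Newman–Girvan modularity matrix. Then every vector x ∈ ℝⁿ with x₁ = 0 and Σ_{j=2}^n xⱼ = 0 satisfies M_NG x = √m · x; moreover √m is the largest eigenvalue of M_NG and it has multiplicity exactly m−1, and every eigenvector of M_NG associated with √m is a zero-sum vector vanishing at the star center (i.e., satisfies x₁ = 0 and Σⱼ xⱼ = 0). -/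
open Matrix BigOperators

/-- The multiplicity of `μ` as an eigenvalue of the real symmetric matrix `X`. -/
noncomputable def eigMult {n : ℕ} (X : Matrix (Fin n) (Fin n) ℝ) (hX : X.IsHermitian)
    (μ : ℝ) : ℕ :=
  (Finset.univ.filter (fun i => hX.eigenvalues i = μ)).card

/-!
The degree vector of the star with loops is `d = (√m + 1) c` with `c = (√m, 1, …, 1)`,
and `vol G = √m (√m + 1)²`, so `d dᵀ / vol G = c cᵀ / √m`. Subtracting this from `A` clears
the row and column of the centre and leaves `√m I - J / √m = √m (I - J / m)` on the leaves:
`M_NG` is `√m` times the orthogonal projection onto the zero-sum vectors vanishing at the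
centre. Hence `M_NG² = √m M_NG`, every eigenvalue is `0` or `√m`, and the trace `(m - 1) √m`
counts the eigenvalue `√m`.
-/

open Finset

namespace Matrix.IsHermitian

variable {𝕜 : Type*} [RCLike 𝕜] {n : Type*} [Fintype n] [DecidableEq n] {A : Matrix n n 𝕜}
  {c : ℝ}

theorem eigenvalues_eq_zero_or_eq_of_mul_self_eq_smul (hA : A.IsHermitian) (h : A * A = c • A)
    (i : n) : hA.eigenvalues i = 0 ∨ hA.eigenvalues i = c := by
  set v := ⇑(hA.eigenvectorBasis i)
  have hv : v ≠ 0 := (WithLp.ofLp_eq_zero 2).ne.2 <| hA.eigenvectorBasis.orthonormal.ne_zero i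
  have hAv : A *ᵥ v = hA.eigenvalues i • v := hA.mulVec_eigenvectorBasis i
  have key : (hA.eigenvalues i * (hA.eigenvalues i - c)) • v = 0 := by
    have := congrArg (· *ᵥ v) h
    simp only [← mulVec_mulVec, hAv, mulVec_smul, smul_mulVec] at this
    rw [mul_sub, sub_smul, ← smul_smul, ← smul_smul, this, smul_comm, sub_self]
  simpa [sub_eq_zero, hv] using key

theorem trace_eq_card_mul_of_mul_self_eq_smul (hA : A.IsHermitian) (h : A * A = c • A) :
    A.trace = ((#{i | hA.eigenvalues i = c} * c : ℝ) : 𝕜) := by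
  have hsum : ∑ i, hA.eigenvalues i = ∑ i with hA.eigenvalues i = c, c := by
    rw [sum_filter]
    refine sum_congr rfl fun i _ => ?_
    rcases hA.eigenvalues_eq_zero_or_eq_of_mul_self_eq_smul h i with hi | hi <;> simp [hi]
  rw [hA.trace_eq_sum_eigenvalues, ← RCLike.ofReal_sum, hsum, sum_const, nsmul_eq_mul]

end Matrix.IsHermitian

noncomputable def newmanGirvan {n : Type*} [Fintype n] (A : Matrix n n ℝ) : Matrix n n ℝ :=
  A - (∑ i, (A *ᵥ fun _ => 1) i)⁻¹ • vecMulVec (A *ᵥ fun _ => 1) (A *ᵥ fun _ => 1)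

noncomputable def starLoopAdj (m : ℕ) : Matrix (Fin (m + 1)) (Fin (m + 1)) ℝ :=
  of fun i j => if i = j then √m else if i = 0 ∨ j = 0 then 1 else 0

noncomputable def starModularity (m : ℕ) : Matrix (Fin (m + 1)) (Fin (m + 1)) ℝ :=
  of fun i j => if i = 0 ∨ j = 0 then 0 else (if i = j then √m else 0) - (√m)⁻¹

section StarWithLoops

variable (m : ℕ)

theorem starLoopAdj_mulVec_one_apply (i : Fin (m + 1)) :
    (starLoopAdj m *ᵥ fun _ => 1) i = if i = 0 then √m * (√m + 1) else √m + 1 := by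
  cases i using Fin.cases with
  | zero =>
    simp only [mulVec, dotProduct, starLoopAdj, of_apply, true_or, ↓reduceIte, mul_one,
      Fin.sum_univ_succ, (Fin.succ_ne_zero _).symm, sum_const, card_univ, Fintype.card_fin,
      nsmul_eq_mul]
    linear_combination -(Real.mul_self_sqrt (Nat.cast_nonneg (α := ℝ) m))
  | succ i => simp [starLoopAdj, mulVec, dotProduct, Fin.sum_univ_succ, add_comm]

theorem sum_starLoopAdj_mulVec_one :
    ∑ i, (starLoopAdj m *ᵥ fun _ => 1) i = √m * (√m + 1) ^ 2 := by
  simp only [starLoopAdj_mulVec_one_apply, Fin.sum_univ_succ, ↓reduceIte, Fin.succ_ne_zero,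
    sum_const, card_univ, Fintype.card_fin, nsmul_eq_mul]
  linear_combination (-(√(m : ℝ) + 1)) * Real.mul_self_sqrt (Nat.cast_nonneg (α := ℝ) m)

theorem newmanGirvan_starLoopAdj (hm : m ≠ 0) :
    newmanGirvan (starLoopAdj m) = starModularity m := by
  have hs : √(m : ℝ) ≠ 0 := by positivity
  ext i j
  rw [newmanGirvan, sum_starLoopAdj_mulVec_one]
  simp only [Matrix.sub_apply, Matrix.smul_apply, vecMulVec_apply, starLoopAdj_mulVec_one_apply]
  cases i using Fin.cases <;> cases j using Fin.cases <;>
    simp only [starLoopAdj, starModularity, of_apply, Fin.succ_inj, Fin.succ_ne_zero,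
      (Fin.succ_ne_zero _).symm, or_self, or_true, or_false, ↓reduceIte, smul_eq_mul] <;>
    field_simp <;> ring

theorem starModularity_mulVec_apply (x : Fin (m + 1) → ℝ) (i : Fin (m + 1)) :
    (starModularity m *ᵥ x) i =
      if i = 0 then 0 else √m * x i - (√m)⁻¹ * (∑ j, x j - x 0) := by
  cases i using Fin.cases with
  | zero => simp [starModularity, mulVec, dotProduct]
  | succ i =>
    simp [starModularity, mulVec, dotProduct, Fin.sum_univ_succ, sub_mul, sum_sub_distrib,
      mul_sum]

theorem starModularity_mulVec_apply_zero (x : Fin (m + 1) → ℝ) :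
    (starModularity m *ᵥ x) 0 = 0 := by
  simp [starModularity_mulVec_apply]

theorem sum_starModularity_mulVec (x : Fin (m + 1) → ℝ) :
    ∑ i, (starModularity m *ᵥ x) i = 0 := by
  simp [Fin.sum_univ_succ, starModularity_mulVec_apply, sum_sub_distrib, ← mul_sum, ← mul_assoc,
    ← div_eq_mul_inv]

theorem starModularity_mulVec_of_apply_zero_of_sum_eq_zero {x : Fin (m + 1) → ℝ}
    (hx₀ : x 0 = 0) (hx : ∑ j, x j = 0) : starModularity m *ᵥ x = √m • x := by
  ext i
  by_cases hi : i = 0 <;> simp [starModularity_mulVec_apply, hi, hx₀, hx]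

theorem starModularity_mul_self :
    starModularity m * starModularity m = √m • starModularity m := by
  refine ext_iff_mulVec.2 fun x => ?_
  rw [← mulVec_mulVec, smul_mulVec, starModularity_mulVec_of_apply_zero_of_sum_eq_zero m
    (starModularity_mulVec_apply_zero m x) (sum_starModularity_mulVec m x)]

theorem trace_starModularity : (starModularity m).trace = (m - 1) * √m := by
  simp only [trace, starModularity, diag_apply, of_apply, or_self, ↓reduceIte, Fin.sum_univ_succ,
    Fin.succ_ne_zero, sum_sub_distrib, sum_const, card_univ, Fintype.card_fin, nsmul_eq_mul,
    ← div_eq_mul_inv, Real.div_sqrt, zero_add]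
  ring

theorem starModularity_mulVec_eq_sqrt_smul_iff (hm : m ≠ 0) (x : Fin (m + 1) → ℝ) :
    starModularity m *ᵥ x = √m • x ↔ x 0 = 0 ∧ ∑ j, x j = 0 := by
  have hs : √(m : ℝ) ≠ 0 := by positivity
  refine ⟨fun h => ⟨?_, ?_⟩,
    fun h => starModularity_mulVec_of_apply_zero_of_sum_eq_zero m h.1 h.2⟩
  · simpa [hs, starModularity_mulVec_apply_zero] using (congrFun h 0).symm
  · simpa [hs, sum_starModularity_mulVec, ← mul_sum] using (congrArg (∑ i, · i) h).symm

end StarWithLoops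

theorem stmt6 (m : ℕ) (hm : 2 ≤ m)
    (A : Matrix (Fin (m + 1)) (Fin (m + 1)) ℝ)
    (hAdef : A = fun i j =>
      if i = j then Real.sqrt m else if i = 0 ∨ j = 0 then 1 else 0)
    (d : Fin (m + 1) → ℝ) (hd : d = A *ᵥ (fun _ => 1))
    (volG : ℝ) (hvolG : volG = ∑ i, d i)
    (M : Matrix (Fin (m + 1)) (Fin (m + 1)) ℝ)
    (hMdef : M = A - volG⁻¹ • vecMulVec d d)
    (hM : M.IsHermitian) :
    (∀ x : Fin (m + 1) → ℝ, x 0 = 0 → (∑ j, x j) = 0 →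
        M *ᵥ x = Real.sqrt m • x) ∧
    lam1 M hM = Real.sqrt m ∧
    eigMult M hM (Real.sqrt m) = m - 1 ∧
    (∀ x : Fin (m + 1) → ℝ, x ≠ 0 → M *ᵥ x = Real.sqrt m • x →
        x 0 = 0 ∧ (∑ j, x j) = 0) := by
  have hm₀ : m ≠ 0 := by omega
  have hs : 0 < √(m : ℝ) := by positivity
  subst hAdef hd hvolG
  obtain rfl : M = starModularity m := hMdef.trans (newmanGirvan_starLoopAdj m hm₀)
  have hmul := starModularity_mul_self m
  have hcard : #{i | hM.eigenvalues i = √m} = m - 1 := by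
    have h := hM.trace_eq_card_mul_of_mul_self_eq_smul hmul
    rw [trace_starModularity, RCLike.ofReal_real_eq_id, id, ← Nat.cast_pred (by omega)] at h
    exact_mod_cast (mul_right_cancel₀ hs.ne' h).symm
  obtain ⟨i, -, hi⟩ := filter_nonempty_iff.1 <| card_pos.1 <|
    show 0 < #{i | hM.eigenvalues i = √m} by omega
  have heig := starModularity_mulVec_eq_sqrt_smul_iff m hm₀
  refine ⟨fun x hx₀ hx => (heig x).2 ⟨hx₀, hx⟩, ?_, hcard, fun x _ hx => (heig x).1 hx⟩
  refine IsLUB.ciSup_eq (IsGreatest.isLUB ⟨⟨i, hi⟩, Set.forall_mem_range.2 fun j => ?_⟩)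
  rcases hM.eigenvalues_eq_zero_or_eq_of_mul_self_eq_smul hmul j with h | h <;> simp [h, hs.le]
end

section
/- Let M be an n×n generalized modularity matrix, let S₁,…,S_k (k ≥ 1) be pairwise disjoint nonempty subsets of {1,…,n}, and let C be the k×k symmetric matrix with entries C_{ij} = 𝟙_{S_i}ᵀ M 𝟙_{S_j}. Then the number of positive eigenvalues of M (counted with multiplicity) is at least the number of positive eigenvalues of C, and the number of nonnegative eigenvalues of M is at least the number of nonnegative eigenvalues of C. -/
open Matrix BigOperators

/-- The characteristic vector `𝟙_S` of a set of indices. -/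
noncomputable def charVec {n : ℕ} (S : Finset (Fin n)) : Fin n → ℝ :=
  fun i => if i ∈ S then 1 else 0

/-- The (joint) modularity `Q(S,T) = 𝟙_Sᵀ M 𝟙_T`; the modularity of `S` is `Q(S,S)`. -/
noncomputable def modQ {n : ℕ} (M : Matrix (Fin n) (Fin n) ℝ)
    (S T : Finset (Fin n)) : ℝ :=
  charVec S ⬝ᵥ (M *ᵥ charVec T)

/-- The number of positive eigenvalues (with multiplicity) of a real symmetric matrix. -/
noncomputable def posEigCount {n : ℕ} (X : Matrix (Fin n) (Fin n) ℝ)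
    (hX : X.IsHermitian) : ℕ :=
  (Finset.univ.filter (fun i => 0 < hX.eigenvalues i)).card

/-- The number of nonnegative eigenvalues (with multiplicity) of a real symmetric matrix. -/
noncomputable def nonnegEigCount {n : ℕ} (X : Matrix (Fin n) (Fin n) ℝ)
    (hX : X.IsHermitian) : ℕ :=
  (Finset.univ.filter (fun i => 0 ≤ hX.eigenvalues i)).card

/-
With `B` the `n × k` matrix whose columns are the `𝟙_{S i}`, `C = Bᵀ M B`, and `B` is injective
because the `S i` are disjoint and nonempty; so the quadratic form of `C` is the pullback of that of
`M` along an injective linear map. By Sylvester's law of inertia, the number of positive (negative)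
eigenvalues of a symmetric matrix is the largest dimension of a subspace on which its quadratic form
is positive (negative) definite. A positive-definite subspace for `C` is mapped by `B` to one for
`M` of the same dimension. A negative-definite subspace for `M` pulls back along `B` to one for `C`
losing at most `n - k` dimensions, so `k - #neg(C) ≤ n - #neg(M)`: these are the nonnegative
counts.
-/

open Module QuadraticMap

namespace QuadraticForm

variable {𝕜 M M' : Type*} [Field 𝕜] [LinearOrder 𝕜] [AddCommGroup M] [Module 𝕜 M]
  [AddCommGroup M'] [Module 𝕜 M'] [FiniteDimensional 𝕜 M] [FiniteDimensional 𝕜 M']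
  {f : M' →ₗ[𝕜] M}

lemma sigPos_comp_le_of_injective (Q : QuadraticForm 𝕜 M) (hf : Function.Injective f) :
    sigPos (Q.comp f) ≤ sigPos Q := by
  obtain ⟨V, hVdim, hVpos⟩ := exists_finrank_eq_sigPos_and_posDef (Q.comp f)
  rw [← hVdim, (Submodule.equivMapOfInjective f hf V).finrank_eq]
  refine le_sigPos_of_posDef Q ?_
  rintro ⟨_, y, hy, rfl⟩ hne
  exact hVpos ⟨y, hy⟩ fun h => hne (by simp_all)

lemma sigNeg_add_finrank_le_of_injective (Q : QuadraticForm 𝕜 M) (hf : Function.Injective f) :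
    sigNeg Q + finrank 𝕜 M' ≤ sigNeg (Q.comp f) + finrank 𝕜 M := by
  obtain ⟨V, hVdim, hVneg⟩ := exists_finrank_eq_sigNeg_and_negDef Q
  have hcomap : finrank 𝕜 (V.comap f) ≤ sigNeg (Q.comp f) := by
    refine le_sigNeg_of_negDef _ fun x hx => hVneg ⟨f x, x.2⟩ fun h => hx ?_
    exact Subtype.ext (hf (by simpa using congrArg Subtype.val h))
  have hinf : finrank 𝕜 (V.comap f) = finrank 𝕜 ↥(V ⊓ LinearMap.range f) := by
    rw [(Submodule.equivMapOfInjective f hf _).finrank_eq, Submodule.map_comap_eq, inf_comm]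
  have hsup := (V ⊔ LinearMap.range f).finrank_le
  have hdim := Submodule.finrank_sup_add_finrank_inf_eq V (LinearMap.range f)
  rw [LinearMap.finrank_range_of_inj hf] at hdim
  omega

end QuadraticForm

namespace Matrix

variable {R m n : Type*} [CommRing R] [Fintype m] [Fintype n] [DecidableEq m] [DecidableEq n]

lemma toQuadraticForm'_apply (A : Matrix n n R) (x : n → R) :
    A.toQuadraticForm' x = x ⬝ᵥ A *ᵥ x := by
  simp [toQuadraticForm', toLinearMap₂'_apply']

lemma toQuadraticForm'_transpose_mul_mul (A : Matrix m m R) (B : Matrix m n R) :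
    (Bᵀ * A * B).toQuadraticForm' = A.toQuadraticForm'.comp B.mulVecLin := by
  ext x
  simp only [toQuadraticForm'_apply, QuadraticMap.comp_apply, mulVecLin_apply, ← mulVec_mulVec,
    dotProduct_mulVec x Bᵀ, vecMul_transpose]

lemma toQuadraticForm'_diagonal (w : n → R) :
    (diagonal w).toQuadraticForm' = weightedSumSquares R w := by
  ext x
  simp only [toQuadraticForm'_apply, weightedSumSquares_apply, dotProduct, mulVec_diagonal,
    smul_eq_mul]
  exact Finset.sum_congr rfl fun i _ => by ring

end Matrix

namespace Matrix.IsHermitian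

variable {n : Type*} [Fintype n] [DecidableEq n] {A : Matrix n n ℝ}

lemma transpose_eigenvectorUnitary_mul_mul (hA : A.IsHermitian) :
    (hA.eigenvectorUnitary : Matrix n n ℝ)ᵀ * A * hA.eigenvectorUnitary =
      diagonal hA.eigenvalues := by
  have := hA.conjStarAlgAut_star_eigenvectorUnitary
  rw [Unitary.conjStarAlgAut_star_apply] at this
  simpa [star_eq_conjTranspose, conjTranspose_eq_transpose_of_trivial] using this

lemma toQuadraticForm'_equivalent_weightedSumSquares (hA : A.IsHermitian) :
    A.toQuadraticForm'.Equivalent (weightedSumSquares ℝ hA.eigenvalues) := by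
  let U := UnitaryGroup.toLinearEquiv hA.eigenvectorUnitary
  have hU : A.toQuadraticForm'.comp (U : (n → ℝ) →ₗ[ℝ] n → ℝ) =
      weightedSumSquares ℝ hA.eigenvalues := by
    rw [← toQuadraticForm'_diagonal, ← hA.transpose_eigenvectorUnitary_mul_mul,
      toQuadraticForm'_transpose_mul_mul]
    rfl
  exact hU ▸ ⟨A.toQuadraticForm'.isometryEquivOfCompLinearEquiv U⟩

end Matrix.IsHermitian

lemma posEigCount_eq_sigPos {m : ℕ} {A : Matrix (Fin m) (Fin m) ℝ} (hA : A.IsHermitian) :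
    posEigCount A hA = sigPos A.toQuadraticForm' := by
  rw [QuadraticForm.sigPos_of_equiv_weightedSumSquares
    hA.toQuadraticForm'_equivalent_weightedSumSquares, posEigCount, ← Set.ncard_coe_finset]
  simp

lemma nonnegEigCount_add_sigNeg {m : ℕ} {A : Matrix (Fin m) (Fin m) ℝ} (hA : A.IsHermitian) :
    nonnegEigCount A hA + sigNeg A.toQuadraticForm' = m := by
  rw [QuadraticForm.sigNeg_of_equiv_weightedSumSquares
    hA.toQuadraticForm'_equivalent_weightedSumSquares, nonnegEigCount, Set.ncard_eq_toFinset_card']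
  simpa [not_le] using Finset.card_filter_add_card_filter_not (s := Finset.univ)
    (fun i => 0 ≤ hA.eigenvalues i)

section Congruence

variable {m k : ℕ} {A : Matrix (Fin m) (Fin m) ℝ} {B : Matrix (Fin m) (Fin k) ℝ}

lemma posEigCount_transpose_mul_mul_le (hA : A.IsHermitian) (hB : Function.Injective B.mulVec)
    (hBAB : (Bᵀ * A * B).IsHermitian) : posEigCount (Bᵀ * A * B) hBAB ≤ posEigCount A hA := by
  rw [posEigCount_eq_sigPos, posEigCount_eq_sigPos, toQuadraticForm'_transpose_mul_mul]
  exact QuadraticForm.sigPos_comp_le_of_injective _ hB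

lemma nonnegEigCount_transpose_mul_mul_le (hA : A.IsHermitian) (hB : Function.Injective B.mulVec)
    (hBAB : (Bᵀ * A * B).IsHermitian) :
    nonnegEigCount (Bᵀ * A * B) hBAB ≤ nonnegEigCount A hA := by
  have hsig := QuadraticForm.sigNeg_add_finrank_le_of_injective A.toQuadraticForm'
    (f := B.mulVecLin) hB
  rw [← toQuadraticForm'_transpose_mul_mul, finrank_fin_fun, finrank_fin_fun] at hsig
  have hA_count := nonnegEigCount_add_sigNeg hA
  have hBAB_count := nonnegEigCount_add_sigNeg hBAB
  omega

end Congruence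

section CharVec

variable {n k : ℕ} {S : Fin k → Finset (Fin n)}

noncomputable def charMatrix (S : Fin k → Finset (Fin n)) : Matrix (Fin n) (Fin k) ℝ :=
  Matrix.of fun j i => charVec (S i) j

lemma modQ_eq_charMatrix_transpose_mul_mul_apply (M : Matrix (Fin n) (Fin n) ℝ) (i j : Fin k) :
    modQ M (S i) (S j) = ((charMatrix S)ᵀ * M * charMatrix S) i j := by
  rw [Matrix.mul_assoc, Matrix.mul_apply]
  simp [modQ, charMatrix, dotProduct, Matrix.mul_apply, Matrix.mulVec]

lemma charMatrix_mulVec_apply_of_mem (hS : ∀ i j, i ≠ j → Disjoint (S i) (S j)) (x : Fin k → ℝ)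
    {i : Fin k} {j : Fin n} (hj : j ∈ S i) : (charMatrix S *ᵥ x) j = x i := by
  rw [Matrix.mulVec, dotProduct, Finset.sum_eq_single i]
  · simp [charMatrix, charVec, hj]
  · intro b _ hbi
    simp [charMatrix, charVec, Finset.disjoint_left.mp (hS i b (Ne.symm hbi)) hj]
  · simp

lemma charMatrix_mulVec_injective (hSne : ∀ i, (S i).Nonempty)
    (hS : ∀ i j, i ≠ j → Disjoint (S i) (S j)) : Function.Injective (charMatrix S).mulVec := by
  intro x y hxy
  funext i
  obtain ⟨j, hj⟩ := hSne i
  rw [← charMatrix_mulVec_apply_of_mem hS x hj, ← charMatrix_mulVec_apply_of_mem hS y hj, hxy]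

end CharVec

theorem stmt9_general {n k : ℕ} (M : Matrix (Fin n) (Fin n) ℝ)
    (hM : M.IsHermitian)
    (S : Fin k → Finset (Fin n)) (hSne : ∀ i, (S i).Nonempty)
    (hSdisj : ∀ i j, i ≠ j → Disjoint (S i) (S j))
    (C : Matrix (Fin k) (Fin k) ℝ)
    (hCdef : C = fun i j => modQ M (S i) (S j))
    (hC : C.IsHermitian) :
    posEigCount C hC ≤ posEigCount M hM ∧
    nonnegEigCount C hC ≤ nonnegEigCount M hM := by
  obtain rfl : C = (charMatrix S)ᵀ * M * charMatrix S :=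
    hCdef.trans (funext₂ (modQ_eq_charMatrix_transpose_mul_mul_apply M))
  have hB := charMatrix_mulVec_injective hSne hSdisj
  exact ⟨posEigCount_transpose_mul_mul_le hM hB hC, nonnegEigCount_transpose_mul_mul_le hM hB hC⟩

theorem stmt9 {n k : ℕ} (hk : 1 ≤ k) (A W M : Matrix (Fin n) (Fin n) ℝ)
    (hA : A.IsHermitian) (hApos : ∀ i j, 0 ≤ A i j) (hAirr : A.Irreducible)
    (hW : W.IsDiag) (v : Fin n → ℝ) (hv : v ≠ 0) (hvpos : ∀ i, 0 ≤ v i)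
    (σ : ℝ) (hσ : 0 < σ)
    (hMdef : M = A + W - σ • vecMulVec v v) (hM : M.IsHermitian)
    (S : Fin k → Finset (Fin n)) (hSne : ∀ i, (S i).Nonempty)
    (hSdisj : ∀ i j, i ≠ j → Disjoint (S i) (S j))
    (C : Matrix (Fin k) (Fin k) ℝ)
    (hCdef : C = fun i j => modQ M (S i) (S j))
    (hC : C.IsHermitian) :
    posEigCount C hC ≤ posEigCount M hM ∧
    nonnegEigCount C hC ≤ nonnegEigCount M hM :=
  stmt9_general M hM S hSne hSdisj C hCdef hC
end

section
/- Let M be an n×n generalized modularity matrix and let S₁,…,S_k (k ≥ 1) be pairwise disjoint nonempty subsets of {1,…,n} such that Q(S_i) > 0 for all i and Q(S_i, S_j) < 0 for all i ≠ j. If there exist positive real numbers α₁,…,α_k such that α_i·Q(S_i) > Σ_{j≠i} α_j·|Q(S_i,S_j)| for every i, then M has at least k positive eigenvalues (counted with multiplicity). -/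
open Matrix BigOperators

/-! Rescaling `𝟙_{S_i}` by `α_i` turns the domination hypothesis into strict diagonal dominance of
the Gram matrix `G i j = (α_i 𝟙_{S_i})ᵀ M (α_j 𝟙_{S_j})`, so by Gershgorin `G` is positive definite:
`M` is positive definite on the `k`-dimensional span of the `α_i 𝟙_{S_i}`. Expanding `xᵀ M x` in an
eigenbasis, a vector orthogonal to all eigenvectors with positive eigenvalue has `xᵀ M x ≤ 0`, so
projecting that span onto the positive eigenvectors is injective. -/

namespace Matrix

variable {ι : Type*} [Fintype ι] [DecidableEq ι]

theorem IsHermitian.dotProduct_mulVec_self_eq_sum {M : Matrix ι ι ℝ} (hM : M.IsHermitian)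
    (x : ι → ℝ) :
    x ⬝ᵥ M *ᵥ x =
      ∑ i, hM.eigenvalues i * ((star (hM.eigenvectorUnitary : Matrix ι ι ℝ)) *ᵥ x) i ^ 2 := by
  conv_lhs => rw [hM.spectral_theorem]
  rw [Unitary.conjStarAlgAut_apply, ← mulVec_mulVec, ← mulVec_mulVec, dotProduct_mulVec,
    star_eq_conjTranspose, conjTranspose_eq_transpose_of_trivial, mulVec_transpose]
  simp [dotProduct, mulVec_diagonal, sq, mul_left_comm]

theorem IsHermitian.posDef_of_sum_abs_lt_diag {C : Matrix ι ι ℝ} (hC : C.IsHermitian)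
    (h : ∀ i, ∑ j ∈ Finset.univ.erase i, |C i j| < C i i) : C.PosDef := by
  rw [hC.posDef_iff_eigenvalues_pos]
  intro i
  have hμ : Module.End.HasEigenvalue (toLin' C) (hC.eigenvalues i) := by
    rw [Module.End.hasEigenvalue_iff_mem_spectrum, spectrum_toLin']
    exact hC.eigenvalues_mem_spectrum_real i
  obtain ⟨l, hl⟩ := eigenvalue_mem_ball hμ
  rw [Metric.mem_closedBall, Real.dist_eq] at hl
  simp only [Real.norm_eq_abs] at hl
  linarith [neg_abs_le (hC.eigenvalues i - C l l), h l]

theorem IsHermitian.posDef_diagonal_mul_mul_diagonal {B : Matrix ι ι ℝ} (hB : B.IsHermitian)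
    {α : ι → ℝ} (hα : ∀ i, 0 < α i)
    (h : ∀ i, ∑ j ∈ Finset.univ.erase i, α j * |B i j| < α i * B i i) :
    (diagonal α * B * diagonal α).PosDef := by
  have hD : (diagonal α)ᴴ = diagonal α := by
    rw [diagonal_conjTranspose, star_trivial]
  have hherm : (diagonal α * B * diagonal α).IsHermitian := by
    simpa only [hD] using isHermitian_conjTranspose_mul_mul (diagonal α) hB
  refine hherm.posDef_of_sum_abs_lt_diag fun i => ?_
  simp only [diagonal_mul, mul_diagonal, abs_mul, abs_of_pos (hα _)]
  calc ∑ j ∈ Finset.univ.erase i, α i * |B i j| * α j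
      = α i * ∑ j ∈ Finset.univ.erase i, α j * |B i j| := by
        rw [Finset.mul_sum]
        exact Finset.sum_congr rfl fun j _ => by ring
    _ < α i * (α i * B i i) := mul_lt_mul_of_pos_left (h i) (hα i)
    _ = α i * B i i * α i := by ring

end Matrix

theorem finrank_le_posEigCount {n : ℕ} {M : Matrix (Fin n) (Fin n) ℝ} (hM : M.IsHermitian)
    {E : Type*} [AddCommGroup E] [Module ℝ E] [FiniteDimensional ℝ E] (L : E →ₗ[ℝ] Fin n → ℝ)
    (hL : ∀ c, c ≠ 0 → 0 < L c ⬝ᵥ M *ᵥ L c) :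
    Module.finrank ℝ E ≤ posEigCount M hM := by
  set U : Matrix (Fin n) (Fin n) ℝ := ↑hM.eigenvectorUnitary
  set P : (Fin n → ℝ) →ₗ[ℝ] {i // 0 < hM.eigenvalues i} → ℝ :=
    LinearMap.funLeft ℝ ℝ Subtype.val ∘ₗ (star U).mulVecLin
  have hP : Function.Injective (P ∘ₗ L) := by
    rw [← LinearMap.ker_eq_bot, LinearMap.ker_eq_bot']
    intro c hc
    by_contra hc0
    refine (hL c hc0).not_ge ?_
    rw [hM.dotProduct_mulVec_self_eq_sum]
    refine Finset.sum_nonpos fun i _ => ?_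
    by_cases hi : 0 < hM.eigenvalues i
    · have hy : (star U *ᵥ L c) i = 0 := congrFun hc ⟨i, hi⟩
      rw [hy, sq, mul_zero, mul_zero]
    · exact mul_nonpos_of_nonpos_of_nonneg (not_lt.mp hi) (sq_nonneg _)
  calc Module.finrank ℝ E ≤ Module.finrank ℝ ({i // 0 < hM.eigenvalues i} → ℝ) :=
        LinearMap.finrank_le_finrank_of_injective hP
    _ = posEigCount M hM := by
        rw [Module.finrank_fintype_fun_eq_card, Fintype.card_subtype, posEigCount]

theorem card_le_posEigCount_of_posDef_transpose_mul_mul {n : ℕ} {M : Matrix (Fin n) (Fin n) ℝ}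
    (hM : M.IsHermitian) {κ : Type*} [Fintype κ] (X : Matrix (Fin n) κ ℝ)
    (hX : (Xᵀ * M * X).PosDef) : Fintype.card κ ≤ posEigCount M hM := by
  rw [← Module.finrank_fintype_fun_eq_card ℝ]
  refine finrank_le_posEigCount hM X.mulVecLin fun c hc => ?_
  have hquad : X *ᵥ c ⬝ᵥ M *ᵥ X *ᵥ c = star c ⬝ᵥ (Xᵀ * M * X) *ᵥ c := by
    rw [star_trivial, ← mulVec_mulVec, ← mulVec_mulVec, dotProduct_mulVec c Xᵀ, vecMul_transpose]
  simpa only [mulVecLin_apply, hquad] using hX.dotProduct_mulVec_pos hc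

theorem stmt10_general {n k : ℕ} (M : Matrix (Fin n) (Fin n) ℝ)
    (hM : M.IsHermitian)
    (S : Fin k → Finset (Fin n))
    (α : Fin k → ℝ) (hα : ∀ i, 0 < α i)
    (hdom : ∀ i, (∑ j ∈ Finset.univ.erase i, α j * |modQ M (S i) (S j)|) <
      α i * modQ M (S i) (S i)) :
    k ≤ posEigCount M hM := by
  set C : Matrix (Fin n) (Fin k) ℝ := (of fun i => charVec (S i))ᵀ
  have hQ : Cᵀ * M * C = of fun i j => modQ M (S i) (S j) := by
    ext i j
    simp only [C, modQ, transpose_transpose, mul_apply, of_apply, transpose_apply, dotProduct,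
      mulVec, Finset.mul_sum, Finset.sum_mul]
    rw [Finset.sum_comm]
    exact Finset.sum_congr rfl fun _ _ => Finset.sum_congr rfl fun _ _ => by ring
  have hQherm : (Cᵀ * M * C).IsHermitian := by
    simpa only [conjTranspose_eq_transpose_of_trivial] using isHermitian_conjTranspose_mul_mul C hM
  have hG := hQherm.posDef_diagonal_mul_mul_diagonal hα (by simpa only [hQ, of_apply] using hdom)
  simpa only [Fintype.card_fin] using card_le_posEigCount_of_posDef_transpose_mul_mul hM
    (C * diagonal α) (by simpa only [transpose_mul, diagonal_transpose, Matrix.mul_assoc] using hG)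

theorem stmt10 {n k : ℕ} (hk : 1 ≤ k) (A W M : Matrix (Fin n) (Fin n) ℝ)
    (hA : A.IsHermitian) (hApos : ∀ i j, 0 ≤ A i j) (hAirr : A.Irreducible)
    (hW : W.IsDiag) (v : Fin n → ℝ) (hv : v ≠ 0) (hvpos : ∀ i, 0 ≤ v i)
    (σ : ℝ) (hσ : 0 < σ)
    (hMdef : M = A + W - σ • vecMulVec v v) (hM : M.IsHermitian)
    (S : Fin k → Finset (Fin n)) (hSne : ∀ i, (S i).Nonempty)
    (hSdisj : ∀ i j, i ≠ j → Disjoint (S i) (S j))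
    (hQpos : ∀ i, 0 < modQ M (S i) (S i))
    (hQneg : ∀ i j, i ≠ j → modQ M (S i) (S j) < 0)
    (α : Fin k → ℝ) (hα : ∀ i, 0 < α i)
    (hdom : ∀ i, (∑ j ∈ Finset.univ.erase i, α j * |modQ M (S i) (S j)|) <
      α i * modQ M (S i) (S i)) :
    k ≤ posEigCount M hM :=
  stmt10_general M hM S α hα hdom
end

section
/- Let A be an n×n symmetric, entrywise nonnegative, irreducible matrix with Q_NG the Newman–Girvan modularity function of A, let i ≠ j be two indices both belonging to a subset S ⊆ {1,…,n}, let ε > 0, and let A' = A + ε·(e_i e_jᵀ + e_j e_iᵀ) with Newman–Girvan modularity function Q'_NG. Then Q'_NG(S) − Q_NG(S) = 2ε·(vol G − vol S)² / (vol G · (vol G + 2ε)). In particular, if vol S < vol G then Q'_NG(S) > Q_NG(S). -/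
open Matrix BigOperators

/-- The degree vector `d = A·𝟙`. -/
noncomputable def degVec {n : ℕ} (A : Matrix (Fin n) (Fin n) ℝ) : Fin n → ℝ :=
  A *ᵥ (fun _ => 1)

/-- The volume of the graph, `vol G = 𝟙ᵀ d`. -/
noncomputable def volG {n : ℕ} (A : Matrix (Fin n) (Fin n) ℝ) : ℝ :=
  ∑ i, degVec A i

/-- The volume of a vertex subset, `vol S = ∑_{i ∈ S} d_i`. -/
noncomputable def volS {n : ℕ} (A : Matrix (Fin n) (Fin n) ℝ) (S : Finset (Fin n)) : ℝ :=
  ∑ i ∈ S, degVec A i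

/-- The Newman–Girvan modularity matrix `M_NG = A - (1 / vol G) · d dᵀ`. -/
noncomputable def ngMatrix {n : ℕ} (A : Matrix (Fin n) (Fin n) ℝ) :
    Matrix (Fin n) (Fin n) ℝ :=
  A - (volG A)⁻¹ • vecMulVec (degVec A) (degVec A)

/-- The Newman–Girvan modularity function `Q_NG(S) = 𝟙_Sᵀ M_NG 𝟙_S`. -/
noncomputable def ngQ {n : ℕ} (A : Matrix (Fin n) (Fin n) ℝ) (S : Finset (Fin n)) : ℝ :=
  charVec S ⬝ᵥ (ngMatrix A *ᵥ charVec S)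

/-!
The modularity of `S` splits as `Q(S) = 𝟙_Sᵀ A 𝟙_S - (vol S)² / vol G`, and each of the three
quantities `𝟙_Sᵀ A 𝟙_S`, `vol S`, `vol G` is additive in `A`. Adding `ε` at the positions `(i, j)`
and `(j, i)` with `i, j ∈ S` therefore raises each of them by exactly `2ε`, and the claimed
difference is the identity
`2ε - (s + 2ε)² / (v + 2ε) + s² / v = 2ε (v - s)² / (v (v + 2ε))`.
-/

lemma charVec_dotProduct {n : ℕ} (S : Finset (Fin n)) (v : Fin n → ℝ) :
    charVec S ⬝ᵥ v = ∑ a ∈ S, v a := by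
  simp [charVec, dotProduct, ite_mul, Finset.sum_ite_mem]

lemma charVec_dotProduct_degVec {n : ℕ} (A : Matrix (Fin n) (Fin n) ℝ) (S : Finset (Fin n)) :
    charVec S ⬝ᵥ degVec A = volS A S :=
  charVec_dotProduct S _

lemma ngQ_eq_sub_div {n : ℕ} (A : Matrix (Fin n) (Fin n) ℝ) (S : Finset (Fin n)) :
    ngQ A S = charVec S ⬝ᵥ (A *ᵥ charVec S) - volS A S ^ 2 / volG A := by
  rw [ngQ, ngMatrix, sub_mulVec, dotProduct_sub, smul_mulVec, vecMulVec_mulVec,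
    dotProduct_comm _ (charVec S)]
  simp only [MulOpposite.smul_eq_mul_unop, MulOpposite.unop_op, dotProduct_smul, smul_eq_mul,
    charVec_dotProduct_degVec]
  ring

section Perturbation

variable {n : ℕ} (A B : Matrix (Fin n) (Fin n) ℝ) {S : Finset (Fin n)} {i j : Fin n} (c : ℝ)

lemma degVec_add : degVec (A + B) = degVec A + degVec B :=
  add_mulVec A B _

lemma volG_add : volG (A + B) = volG A + volG B := by
  simp only [volG, degVec_add, Pi.add_apply, Finset.sum_add_distrib]

lemma volS_add : volS (A + B) S = volS A S + volS B S := by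
  simp only [volS, degVec_add, Pi.add_apply, Finset.sum_add_distrib]

lemma charVec_dotProduct_add_mulVec_charVec :
    charVec S ⬝ᵥ ((A + B) *ᵥ charVec S) =
      charVec S ⬝ᵥ (A *ᵥ charVec S) + charVec S ⬝ᵥ (B *ᵥ charVec S) := by
  rw [add_mulVec, dotProduct_add]

lemma degVec_single : degVec (Matrix.single i j c) = Pi.single i c := by
  simp [degVec, single_mulVec, Pi.single]

lemma volG_single : volG (Matrix.single i j c) = c := by
  simp [volG, degVec_single]

lemma volS_single (hi : i ∈ S) : volS (Matrix.single i j c) S = c := by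
  simp [volS, degVec_single, hi]

lemma charVec_dotProduct_single_mulVec_charVec (hi : i ∈ S) (hj : j ∈ S) :
    charVec S ⬝ᵥ (Matrix.single i j c *ᵥ charVec S) = c := by
  rw [single_mulVec, charVec_dotProduct,
    Finset.sum_eq_single_of_mem i hi fun b _ hb => by simp [hb]]
  simp [charVec, hj]

lemma volG_add_single_add_single :
    volG (A + Matrix.single i j c + Matrix.single j i c) = volG A + 2 * c := by
  rw [volG_add, volG_add, volG_single, volG_single, two_mul, add_assoc]

lemma volS_add_single_add_single (hi : i ∈ S) (hj : j ∈ S) :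
    volS (A + Matrix.single i j c + Matrix.single j i c) S = volS A S + 2 * c := by
  rw [volS_add, volS_add, volS_single c hi, volS_single c hj, two_mul, add_assoc]

lemma charVec_dotProduct_add_single_add_single_mulVec_charVec (hi : i ∈ S) (hj : j ∈ S) :
    charVec S ⬝ᵥ ((A + Matrix.single i j c + Matrix.single j i c) *ᵥ charVec S) =
      charVec S ⬝ᵥ (A *ᵥ charVec S) + 2 * c := by
  rw [charVec_dotProduct_add_mulVec_charVec, charVec_dotProduct_add_mulVec_charVec,
    charVec_dotProduct_single_mulVec_charVec c hi hj,
    charVec_dotProduct_single_mulVec_charVec c hj hi, two_mul, add_assoc]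

lemma ngQ_add_single_add_single_sub_ngQ (hi : i ∈ S) (hj : j ∈ S)
    (hv : volG A ≠ 0) (hv' : volG A + 2 * c ≠ 0) :
    ngQ (A + Matrix.single i j c + Matrix.single j i c) S - ngQ A S =
      2 * c * (volG A - volS A S) ^ 2 / (volG A * (volG A + 2 * c)) := by
  rw [ngQ_eq_sub_div, ngQ_eq_sub_div, volG_add_single_add_single,
    volS_add_single_add_single A c hi hj,
    charVec_dotProduct_add_single_add_single_mulVec_charVec A c hi hj]
  field_simp
  ring

end Perturbation

lemma Matrix.Irreducible.ne_zero {n : ℕ} {A : Matrix (Fin n) (Fin n) ℝ} (hA : A.Irreducible)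
    (i : Fin n) : A ≠ 0 := by
  rintro rfl
  obtain ⟨k, hk, hpos⟩ := hA i i
  simp [zero_pow hk.ne'] at hpos

lemma volG_pos {n : ℕ} {A : Matrix (Fin n) (Fin n) ℝ} (hA : ∀ a b, 0 ≤ A a b) (hA0 : A ≠ 0) :
    0 < volG A := by
  obtain ⟨p, q, hpq⟩ : ∃ p q, A p q ≠ 0 := by
    by_contra! h
    exact hA0 (Matrix.ext h)
  simp only [volG, degVec, mulVec, dotProduct, mul_one]
  exact Finset.sum_pos' (fun a _ => Finset.sum_nonneg fun b _ => hA a b)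
    ⟨p, Finset.mem_univ p, Finset.sum_pos' (fun b _ => hA p b)
      ⟨q, Finset.mem_univ q, (hA p q).lt_of_ne' hpq⟩⟩

theorem stmt15_general {n : ℕ} (A : Matrix (Fin n) (Fin n) ℝ)
    (hApos : ∀ i j, 0 ≤ A i j) (hAirr : A.Irreducible)
    (S : Finset (Fin n)) (i j : Fin n) (hiS : i ∈ S) (hjS : j ∈ S)
    (ε : ℝ) (hε : 0 < ε)
    (A' : Matrix (Fin n) (Fin n) ℝ)
    (hA' : A' = A + Matrix.single i j ε + Matrix.single j i ε) :
    ngQ A' S - ngQ A S =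
      2 * ε * (volG A - volS A S) ^ 2 / (volG A * (volG A + 2 * ε)) ∧
    (volS A S < volG A → ngQ A S < ngQ A' S) := by
  have hv : 0 < volG A := volG_pos hApos (hAirr.ne_zero i)
  have hQ := hA' ▸ ngQ_add_single_add_single_sub_ngQ A ε hiS hjS hv.ne' (by positivity)
  refine ⟨hQ, fun hlt => ?_⟩
  have hgap : 0 < volG A - volS A S := sub_pos.2 hlt
  have : 0 < 2 * ε * (volG A - volS A S) ^ 2 / (volG A * (volG A + 2 * ε)) := by positivity
  linarith

theorem stmt15 {n : ℕ} (A : Matrix (Fin n) (Fin n) ℝ)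
    (hA : A.IsHermitian) (hApos : ∀ i j, 0 ≤ A i j) (hAirr : A.Irreducible)
    (S : Finset (Fin n)) (i j : Fin n) (hij : i ≠ j) (hiS : i ∈ S) (hjS : j ∈ S)
    (ε : ℝ) (hε : 0 < ε)
    (A' : Matrix (Fin n) (Fin n) ℝ)
    (hA' : A' = A + Matrix.single i j ε + Matrix.single j i ε) :
    ngQ A' S - ngQ A S =
      2 * ε * (volG A - volS A S) ^ 2 / (volG A * (volG A + 2 * ε)) ∧
    (volS A S < volG A → ngQ A S < ngQ A' S) :=
  stmt15_general A hApos hAirr S i j hiS hjS ε hε A' hA'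
end
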